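/- Let M_q(n) be the standard quantized matrix algebra over K with n ≥ 2 and q ≠ 0, and assume the ordered monomials {z^α : α ∈ ℕ^{I(n)}} form a K-basis of M_q(n). Then the lexicographic order ≺ satisfies condition (2) of the definition of a monomial ordering: for all α, β, η, γ ∈ ℕ^{I(n)}, if γ ≠ 0, β ≠ γ, and γ = LE(z^α z^β z^η), then β ≺ γ; in particular 0 ≺ γ for every γ ≠ 0. -/

import Mathlib

/-! Common setup: the standard quantized matrix algebra `M_q(n)` of
Faddeev–Reshetikhin–Takhtajan, defined as the quotient of the free
`K`-algebra on the `n²` generators `z_{ij}` by the two-sided ideal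
generated by the relations R1–R4. -/

/-- The generator `z_{ij}` of the free algebra on `Fin n × Fin n`. -/
noncomputable def freeGen (K : Type*) [Field K] (n : ℕ) (i j : Fin n) :
    FreeAlgebra K (Fin n × Fin n) :=
  FreeAlgebra.ι K (i, j)

/-- The defining relations R1–R4 of the standard quantized matrix algebra. -/
inductive QMRel (K : Type*) [Field K] (q : K) (n : ℕ) :
    FreeAlgebra K (Fin n × Fin n) → FreeAlgebra K (Fin n × Fin n) → Prop
  | r1 (i j k : Fin n) (h : j < k) :
      QMRel K q n (freeGen K n i j * freeGen K n i k)
        (q • (freeGen K n i k * freeGen K n i j))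
  | r2 (i j k : Fin n) (h : i < k) :
      QMRel K q n (freeGen K n i j * freeGen K n k j)
        (q • (freeGen K n k j * freeGen K n i j))
  | r3 (i j s t : Fin n) (h1 : i < s) (h2 : t < j) :
      QMRel K q n (freeGen K n i j * freeGen K n s t)
        (freeGen K n s t * freeGen K n i j)
  | r4 (i j s t : Fin n) (h1 : i < s) (h2 : j < t) :
      QMRel K q n (freeGen K n i j * freeGen K n s t)
        (freeGen K n s t * freeGen K n i j +
          (q - q⁻¹) • (freeGen K n i t * freeGen K n s j))

/-- The standard quantized matrix algebra `M_q(n)`: the quotient of the free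
algebra by the two-sided ideal generated by the relations R1–R4. -/
abbrev QuantumMatrix (K : Type*) [Field K] (q : K) (n : ℕ) :=
  RingQuot (QMRel K q n)

/-- The generator `z_{ij}` of `M_q(n)`. -/
noncomputable def Zgen (K : Type*) [Field K] (q : K) (n : ℕ) (i j : Fin n) :
    QuantumMatrix K q n :=
  RingQuot.mkAlgHom K (QMRel K q n) (freeGen K n i j)

/-- The order on the index set `I(n)`: `(k,l) < (i,j)` iff `k < i`, or
`k = i` and `l < j`. -/
def idxLt {n : ℕ} (p r : Fin n × Fin n) : Prop :=
  p.1 < r.1 ∨ (p.1 = r.1 ∧ p.2 < r.2)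

/-- The ordered monomial `z^α`: the product of the `z_{ij}^{α_{ij}}` taken
in decreasing order of the indices `(i,j)`, i.e.
`z_{nn}^{α_{nn}} z_{n,n-1}^{α_{n,n-1}} ⋯ z_{n1}^{α_{n1}} ⋯ z_{11}^{α_{11}}`. -/
noncomputable def zmon (K : Type*) [Field K] (q : K) {n : ℕ}
    (α : Fin n × Fin n → ℕ) : QuantumMatrix K q n :=
  ((List.finRange n).reverse.flatMap fun i =>
    (List.finRange n).reverse.map fun j => Zgen K q n i j ^ α (i, j)).prod

/-- The lexicographic order on exponent vectors: `α ≺ β` iff `α` is smaller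
than `β` at the largest index (w.r.t. the order on `I(n)`) at which they
differ. -/
def expLt {n : ℕ} (α β : Fin n × Fin n → ℕ) : Prop :=
  ∃ p : Fin n × Fin n, α p < β p ∧ ∀ r : Fin n × Fin n, idxLt p r → α r = β r

/-- The indicator exponent vector `ε_{ij}`. -/
def eps {n : ℕ} (i j : Fin n) : Fin n × Fin n → ℕ :=
  fun p => if p = (i, j) then 1 else 0

/-- `γ` is the leading exponent of `f` with respect to the order `lt`,
relative to the PBW basis `b` indexed by exponent vectors:
`γ` occurs with nonzero coefficient in the expansion of `f` and every other
exponent occurring in `f` is `lt`-smaller than `γ`. -/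
def IsLeadExpWrt {K : Type*} [Field K] {q : K} {n : ℕ}
    (lt : (Fin n × Fin n → ℕ) → (Fin n × Fin n → ℕ) → Prop)
    (b : Module.Basis (Fin n × Fin n → ℕ) K (QuantumMatrix K q n))
    (f : QuantumMatrix K q n) (γ : Fin n × Fin n → ℕ) : Prop :=
  b.repr f γ ≠ 0 ∧ ∀ δ, b.repr f δ ≠ 0 → δ = γ ∨ lt δ γ

/-- `γ` is the leading exponent of `f` w.r.t. the lexicographic order. -/
def IsLeadExp {K : Type*} [Field K] {q : K} {n : ℕ}
    (b : Module.Basis (Fin n × Fin n → ℕ) K (QuantumMatrix K q n))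
    (f : QuantumMatrix K q n) (γ : Fin n × Fin n → ℕ) : Prop :=
  IsLeadExpWrt expLt b f γ

/-! Every word `z_{p₁} ⋯ z_{p_k}` in the generators equals `c • z^σ` with `c ≠ 0` and
`σ = ε_{p₁} + ⋯ + ε_{p_k}`, plus ordered monomials with lex-smaller exponents. Sort the word by
swapping adjacent letters that are out of order: R1–R3 only rescale by `q` or `1`, while R4
adds a word of lex-smaller exponent. The induction runs over the exponent in the lex order,
which is the colex order on `ℕ^{I(n)}` and hence well founded, and then the number of
out-of-order pairs. So `LE(z^α z^β z^η) = α + β + η`, which dominates `β` coordinatewise. -/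

section ExpOrder

variable {n : ℕ}

lemma idxLt_iff_toLex_lt {p r : Fin n × Fin n} : idxLt p r ↔ toLex p < toLex r :=
  Prod.Lex.toLex_lt_toLex.symm

def colexKey (α : Fin n × Fin n → ℕ) : Colex (Lex (Fin n × Fin n) → ℕ) :=
  toColex fun p => α (ofLex p)

lemma expLt_iff_colexKey_lt {α β : Fin n × Fin n → ℕ} :
    expLt α β ↔ colexKey α < colexKey β := by
  unfold expLt
  simp only [idxLt_iff_toLex_lt]
  exact ⟨fun ⟨p, h, hr⟩ => ⟨toLex p, fun r hr' => hr (ofLex r) hr', h⟩,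
    fun ⟨p, hr, h⟩ => ⟨ofLex p, h, fun r hr' => hr (toLex r) hr'⟩⟩

lemma colexKey_strictMono : StrictMono (colexKey (n := n)) :=
  fun _ _ h => Pi.toColex_strictMono h

lemma expLt_irrefl (α : Fin n × Fin n → ℕ) : ¬ expLt α α :=
  fun h => lt_irrefl _ (expLt_iff_colexKey_lt.mp h)

lemma expLt_trans {α β γ : Fin n × Fin n → ℕ} (h₁ : expLt α β) (h₂ : expLt β γ) :
    expLt α γ :=
  expLt_iff_colexKey_lt.mpr ((expLt_iff_colexKey_lt.mp h₁).trans (expLt_iff_colexKey_lt.mp h₂))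

lemma expLt_asymm {α β : Fin n × Fin n → ℕ} (h : expLt α β) : ¬ expLt β α :=
  fun h' => (expLt_iff_colexKey_lt.mp h).not_gt (expLt_iff_colexKey_lt.mp h')

lemma expLt_wellFounded : WellFounded (expLt (n := n)) :=
  Subrelation.wf expLt_iff_colexKey_lt.mp (InvImage.wf colexKey wellFounded_lt)

lemma expLt_of_le_of_ne {α β : Fin n × Fin n → ℕ} (hle : α ≤ β) (hne : α ≠ β) : expLt α β :=
  expLt_iff_colexKey_lt.mpr (colexKey_strictMono (lt_of_le_of_ne hle hne))

lemma expLt_add_add {δ γ : Fin n × Fin n → ℕ} (h : expLt δ γ) (α ε : Fin n × Fin n → ℕ) :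
    expLt (α + δ + ε) (α + γ + ε) := by
  obtain ⟨p, hp, hr⟩ := h
  exact ⟨p, by simp only [Pi.add_apply]; omega, fun r h => by simp only [Pi.add_apply, hr r h]⟩

end ExpOrder

section LinearOrderLists

variable {α : Type*} [LinearOrder α]

def numLtPairs : List α → ℕ
  | [] => 0
  | a :: l => l.countP (a < ·) + numLtPairs l

lemma numLtPairs_swap_lt {a b : α} (h : a < b) (u v : List α) :
    numLtPairs (u ++ b :: a :: v) < numLtPairs (u ++ a :: b :: v) := by
  induction u with
  | nil => simp [numLtPairs, h, h.not_gt]; omega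
  | cons x u ih =>
    have hperm : (u ++ b :: a :: v).Perm (u ++ a :: b :: v) :=
      List.Perm.append_left u (List.Perm.swap a b v)
    simp only [List.cons_append, numLtPairs, hperm.countP_eq]
    omega

lemma exists_eq_append_lt_of_not_sortedGE {l : List α} (h : ¬ l.SortedGE) :
    ∃ u a b v, l = u ++ a :: b :: v ∧ a < b := by
  simp only [List.sortedGE_iff_isChain, List.isChain_iff_forall_rel_of_append_cons_cons,
    not_forall, not_le] at h
  obtain ⟨a, b, u, v, hl, hab⟩ := h
  exact ⟨u, a, b, v, hl, hab⟩

end LinearOrderLists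

section Words

variable (K : Type*) [Field K] (q : K) {n : ℕ}

noncomputable def zgen (p : Lex (Fin n × Fin n)) : QuantumMatrix K q n :=
  Zgen K q n (ofLex p).1 (ofLex p).2

noncomputable def zword (w : List (Lex (Fin n × Fin n))) : QuantumMatrix K q n :=
  (w.map (zgen K q)).prod

def wordExp (w : List (Lex (Fin n × Fin n))) : Fin n × Fin n → ℕ :=
  fun p => w.count (toLex p)

def sortedWord (α : Fin n × Fin n → ℕ) : List (Lex (Fin n × Fin n)) :=
  (List.finRange n).reverse.flatMap fun i =>
    (List.finRange n).reverse.flatMap fun j => List.replicate (α (i, j)) (toLex (i, j))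

lemma zword_append (w₁ w₂ : List (Lex (Fin n × Fin n))) :
    zword K q (w₁ ++ w₂) = zword K q w₁ * zword K q w₂ := by
  simp [zword]

lemma wordExp_append (w₁ w₂ : List (Lex (Fin n × Fin n))) :
    wordExp (w₁ ++ w₂) = wordExp w₁ + wordExp w₂ := by
  ext p; simp [wordExp]

lemma wordExp_sortedWord (α : Fin n × Fin n → ℕ) : wordExp (sortedWord α) = α := by
  ext ⟨i, j⟩
  simp [wordExp, sortedWord, List.count_flatMap, List.map_reverse, Function.comp_def,
    ← Fin.sum_univ_def, List.count_replicate, ite_and]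

lemma zword_sortedWord (α : Fin n × Fin n → ℕ) : zword K q (sortedWord α) = zmon K q α := by
  simp [zword, sortedWord, zmon, List.flatMap_def, List.prod_flatten, List.map_flatten,
    Function.comp_def, zgen]

lemma sortedGE_sortedWord (α : Fin n × Fin n → ℕ) : (sortedWord α).SortedGE := by
  rw [List.sortedGE_iff_pairwise, sortedWord, List.pairwise_flatMap, List.pairwise_reverse]
  refine ⟨fun i _ => ?_, (List.pairwise_lt_finRange n).imp fun hi x hx y hy => ?_⟩
  · rw [List.pairwise_flatMap, List.pairwise_reverse]
    refine ⟨fun j _ => List.pairwise_replicate.mpr (Or.inr le_rfl),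
      (List.pairwise_lt_finRange n).imp fun hj x hx y hy => ?_⟩
    rw [List.eq_of_mem_replicate hx, List.eq_of_mem_replicate hy]
    exact le_of_lt (by simpa [Prod.Lex.toLex_lt_toLex] using hj)
  · simp only [List.mem_flatMap, List.mem_replicate] at hx hy
    obtain ⟨-, -, -, rfl⟩ := hx
    obtain ⟨-, -, -, rfl⟩ := hy
    exact (Prod.Lex.toLex_lt_toLex.mpr (.inl hi)).le

lemma zword_eq_zmon_of_sortedGE {w : List (Lex (Fin n × Fin n))} (hw : w.SortedGE) :
    zword K q w = zmon K q (wordExp w) := by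
  have hperm : w.Perm (sortedWord (wordExp w)) :=
    List.perm_iff_count.mpr fun p => congrFun (wordExp_sortedWord (wordExp w)).symm (ofLex p)
  rw [hperm.eq_of_sortedGE hw (sortedGE_sortedWord _), zword_sortedWord, wordExp_sortedWord]

end Words

section Relations

variable (K : Type*) [Field K] (q : K) {n : ℕ}

lemma zword_pair_eq_of_qmRel {i j s t : Fin n} {y : FreeAlgebra K (Fin n × Fin n)}
    (h : QMRel K q n (freeGen K n i j * freeGen K n s t) y) :
    zword K q [toLex (i, j), toLex (s, t)] = RingQuot.mkAlgHom K (QMRel K q n) y := by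
  rw [← RingQuot.mkAlgHom_rel K h]
  simp [zword, zgen, Zgen]

lemma expLt_wordExp_r4 {i j s t : Fin n} (his : i < s) (hjt : j < t) :
    expLt (wordExp [toLex (i, t), toLex (s, j)]) (wordExp [toLex (i, j), toLex (s, t)]) := by
  refine ⟨(s, t), by simp [wordExp, his.ne, hjt.ne], fun ⟨r₁, r₂⟩ hr => ?_⟩
  simp only [idxLt, Fin.lt_def, Fin.ext_iff] at hr his hjt
  simp only [wordExp, List.count_cons, List.count_nil, beq_iff_eq, toLex_inj, Prod.ext_iff,
    Fin.ext_iff]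
  split_ifs <;> omega

lemma zword_pair_of_lt (hq : q ≠ 0) {a b : Lex (Fin n × Fin n)} (h : a < b) :
    (∃ c : K, c ≠ 0 ∧ zword K q [a, b] = c • zword K q [b, a]) ∨
      ∃ x, expLt (wordExp x) (wordExp [a, b]) ∧
        zword K q [a, b] = zword K q [b, a] + (q - q⁻¹) • zword K q x := by
  obtain ⟨⟨i, j⟩, rfl⟩ := toLex.surjective a
  obtain ⟨⟨s, t⟩, rfl⟩ := toLex.surjective b
  rcases Prod.Lex.toLex_lt_toLex.mp h with his | ⟨rfl, hjt⟩
  · rcases lt_trichotomy j t with hjt | rfl | htj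
    · refine .inr ⟨[toLex (i, t), toLex (s, j)], expLt_wordExp_r4 his hjt, ?_⟩
      rw [zword_pair_eq_of_qmRel K q (QMRel.r4 i j s t his hjt)]
      simp [zword, zgen, Zgen]
    · refine .inl ⟨q, hq, ?_⟩
      rw [zword_pair_eq_of_qmRel K q (QMRel.r2 i j s his)]
      simp [zword, zgen, Zgen]
    · refine .inl ⟨1, one_ne_zero, ?_⟩
      rw [zword_pair_eq_of_qmRel K q (QMRel.r3 i j s t his htj)]
      simp [zword, zgen, Zgen]
  · refine .inl ⟨q, hq, ?_⟩
    rw [zword_pair_eq_of_qmRel K q (QMRel.r1 i j t hjt)]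
    simp [zword, zgen, Zgen]

end Relations

section LowerSpan

variable {K M : Type*} [Field K] [AddCommGroup M] [Module K M] {n : ℕ}
  (b : Module.Basis (Fin n × Fin n → ℕ) K M)

def lowerSpan (γ : Fin n × Fin n → ℕ) : Submodule K M :=
  Submodule.span K (b '' {δ | expLt δ γ})

lemma mem_lowerSpan {γ : Fin n × Fin n → ℕ} {f : M} :
    f ∈ lowerSpan b γ ↔ ∀ δ, b.repr f δ ≠ 0 → expLt δ γ := by
  simp [lowerSpan, b.mem_span_image, Set.subset_def]

lemma basis_mem_lowerSpan {δ γ : Fin n × Fin n → ℕ} (h : expLt δ γ) : b δ ∈ lowerSpan b γ :=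
  Submodule.subset_span (Set.mem_image_of_mem b h)

lemma lowerSpan_mono {γ₁ γ₂ : Fin n × Fin n → ℕ} (h : expLt γ₁ γ₂) :
    lowerSpan b γ₁ ≤ lowerSpan b γ₂ :=
  Submodule.span_mono (Set.image_mono fun _ hδ => expLt_trans hδ h)

lemma mem_lowerSpan_of_sub_smul_mem {δ γ : Fin n × Fin n → ℕ} {f : M} {c : K}
    (h : expLt δ γ) (hf : f - c • b δ ∈ lowerSpan b δ) : f ∈ lowerSpan b γ := by
  simpa using add_mem (lowerSpan_mono b h hf) (Submodule.smul_mem _ c (basis_mem_lowerSpan b h))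

lemma repr_self_of_sub_smul_mem {σ : Fin n × Fin n → ℕ} {f : M} {c : K}
    (hf : f - c • b σ ∈ lowerSpan b σ) : b.repr f σ = c := by
  have h : b.repr (f - c • b σ) σ = 0 := by
    by_contra h
    exact expLt_irrefl σ ((mem_lowerSpan b).mp hf σ h)
  simpa [sub_eq_zero] using h

end LowerSpan

lemma eq_of_isLeadExp_of_sub_smul_mem {K : Type*} [Field K] {q : K} {n : ℕ}
    {b : Module.Basis (Fin n × Fin n → ℕ) K (QuantumMatrix K q n)}
    {f : QuantumMatrix K q n} {σ γ : Fin n × Fin n → ℕ} {c : K} (hc : c ≠ 0)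
    (hf : f - c • b σ ∈ lowerSpan b σ) (hγ : IsLeadExp b f γ) : γ = σ := by
  obtain ⟨hfγ, hmax⟩ := hγ
  rcases hmax σ (by rwa [repr_self_of_sub_smul_mem b hf]) with h | hσγ
  · exact h.symm
  have hγσ : γ ≠ σ := by rintro rfl; exact expLt_irrefl γ hσγ
  refine absurd ((mem_lowerSpan b).mp hf γ ?_) (expLt_asymm hσγ)
  simpa [Finsupp.single_apply, hγσ.symm] using hfγ

section Straightening

variable (K : Type*) [Field K] (q : K) {n : ℕ}

def WordLt (w₁ w₂ : List (Lex (Fin n × Fin n))) : Prop :=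
  Prod.Lex expLt (· < ·) (wordExp w₁, numLtPairs w₁) (wordExp w₂, numLtPairs w₂)

lemma wordLt_wellFounded : WellFounded (WordLt (n := n)) :=
  InvImage.wf _ (expLt_wellFounded.prod_lex wellFounded_lt)

lemma wordExp_perm {w₁ w₂ : List (Lex (Fin n × Fin n))} (h : w₁.Perm w₂) :
    wordExp w₁ = wordExp w₂ :=
  funext fun _ => h.count_eq _

theorem exists_zword_sub_smul_mem_lowerSpan (hq : q ≠ 0)
    (b : Module.Basis (Fin n × Fin n → ℕ) K (QuantumMatrix K q n))
    (hb : ∀ α, b α = zmon K q α) (w : List (Lex (Fin n × Fin n))) :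
    ∃ c : K, c ≠ 0 ∧ zword K q w - c • b (wordExp w) ∈ lowerSpan b (wordExp w) := by
  induction w using wordLt_wellFounded.induction with
  | _ w ih =>
  by_cases hw : w.SortedGE
  · refine ⟨1, one_ne_zero, ?_⟩
    rw [one_smul, hb, zword_eq_zmon_of_sortedGE K q hw, sub_self]
    exact zero_mem _
  obtain ⟨u, a, a', v, hw, hlt⟩ := exists_eq_append_lt_of_not_sortedGE hw
  obtain rfl : w = u ++ [a, a'] ++ v := by simp [hw]
  set σ := wordExp (u ++ [a, a'] ++ v)
  have hzword (x) : zword K q (u ++ x ++ v) = zword K q u * zword K q x * zword K q v := by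
    simp only [zword_append]
  have hperm : (u ++ [a', a] ++ v).Perm (u ++ [a, a'] ++ v) :=
    ((List.Perm.swap a a' []).append_left u).append_right v
  obtain ⟨c, hc, hswap⟩ := ih _ (Prod.lex_def.mpr (.inr ⟨wordExp_perm hperm, by
    simpa using numLtPairs_swap_lt hlt u v⟩))
  rw [wordExp_perm hperm] at hswap
  suffices key : ∃ d : K, d ≠ 0 ∧ ∃ g ∈ lowerSpan b σ,
      zword K q (u ++ [a, a'] ++ v) = d • zword K q (u ++ [a', a] ++ v) + g by
    obtain ⟨d, hd, g, hg, heq⟩ := key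
    refine ⟨d * c, mul_ne_zero hd hc, ?_⟩
    have : zword K q (u ++ [a, a'] ++ v) - (d * c) • b σ
        = d • (zword K q (u ++ [a', a] ++ v) - c • b σ) + g := by
      rw [heq, smul_sub, smul_smul]; abel
    rw [this]
    exact add_mem (Submodule.smul_mem _ d hswap) hg
  rcases zword_pair_of_lt K q hq hlt with ⟨d, hd, hrel⟩ | ⟨x, hx, hrel⟩
  · refine ⟨d, hd, 0, zero_mem _, ?_⟩
    rw [add_zero, hzword, hzword, hrel, mul_smul_comm, smul_mul_assoc]
  · have hxσ : expLt (wordExp (u ++ x ++ v)) σ := by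
      simpa only [σ, wordExp_append] using expLt_add_add hx (wordExp u) (wordExp v)
    obtain ⟨c', -, hx'⟩ := ih _ (Prod.lex_def.mpr (.inl hxσ))
    refine ⟨1, one_ne_zero, (q - q⁻¹) • zword K q (u ++ x ++ v),
      Submodule.smul_mem _ _ (mem_lowerSpan_of_sub_smul_mem b hxσ hx'), ?_⟩
    rw [one_smul, hzword, hzword, hzword, hrel, mul_add, add_mul, mul_smul_comm, smul_mul_assoc]

end Straightening

theorem expLt_monomial_ordering_cond2_general (K : Type*) [Field K]
    (q : K) (hq : q ≠ 0) (n : ℕ)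
    (b : Module.Basis (Fin n × Fin n → ℕ) K (QuantumMatrix K q n))
    (hb : ∀ α, b α = zmon K q α) :
    (∀ α β η γ : Fin n × Fin n → ℕ, γ ≠ 0 → β ≠ γ →
      IsLeadExp b (zmon K q α * zmon K q β * zmon K q η) γ → expLt β γ) ∧
    (∀ γ : Fin n × Fin n → ℕ, γ ≠ 0 → expLt 0 γ) := by
  refine ⟨fun α β η γ _ hβγ hγ => ?_,
    fun γ hγ => expLt_of_le_of_ne (fun p => Nat.zero_le (γ p)) hγ.symm⟩
  set w := sortedWord α ++ sortedWord β ++ sortedWord η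
  have hw : zword K q w = zmon K q α * zmon K q β * zmon K q η := by
    simp only [w, zword_append, zword_sortedWord]
  have hexp : wordExp w = α + β + η := by
    simp only [w, wordExp_append, wordExp_sortedWord]
  obtain ⟨c, hc, hmem⟩ := exists_zword_sub_smul_mem_lowerSpan K q hq b hb w
  rw [hw, hexp] at hmem
  obtain rfl := eq_of_isLeadExp_of_sub_smul_mem hc hmem hγ
  exact expLt_of_le_of_ne (fun p => by simp only [Pi.add_apply]; omega) hβγ

/-- the lexicographic order satisfies condition (2) of the
definition of a monomial ordering: if `γ ≠ 0`, `β ≠ γ`, and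
`γ = LE(z^α z^β z^η)`, then `β ≺ γ`; in particular `0 ≺ γ` for `γ ≠ 0`. -/
theorem expLt_monomial_ordering_cond2 (K : Type*) [Field K] [CharZero K]
    (q : K) (hq : q ≠ 0) (n : ℕ) (hn : 2 ≤ n)
    (b : Module.Basis (Fin n × Fin n → ℕ) K (QuantumMatrix K q n))
    (hb : ∀ α, b α = zmon K q α) :
    (∀ α β η γ : Fin n × Fin n → ℕ, γ ≠ 0 → β ≠ γ →
      IsLeadExp b (zmon K q α * zmon K q β * zmon K q η) γ → expLt β γ) ∧
    (∀ γ : Fin n × Fin n → ℕ, γ ≠ 0 → expLt 0 γ) :=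
  expLt_monomial_ordering_cond2_general K q hq n b hb
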